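/- There exists a connected finite graph G that is not edge-transitive, yet all edge residuals Res(G, {u,v}) over edges {u,v} of G are isomorphic. -/

import Mathlib

/-!
Take the square `0 - 1 - 2 - 3` with a pendant vertex `4` at `0` and `5` at `2`. Every edge has a
unique farthest vertex, so every edge residual is a single vertex. The graph is not
edge-transitive: the pendant edge `{0, 4}` has an endpoint of degree one, the square edge
`{0, 1}` has none, and automorphisms preserve degrees.

Distances to an edge are certified by a labelling `f` that vanishes exactly on the edge, grows by
at most one along every edge, and has a neighbour one step lower at every other vertex.
-/

open SimpleGraph

/-- Distance from a set of vertices `S` to a vertex `v`: `min_{s ∈ S} d(s, v)`. -/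
noncomputable def setDist {V : Type*} (G : SimpleGraph V) (S : Set V) (v : V) : ℕ :=
  sInf ((fun s => G.dist s v) '' S)

/-- The set of vertices at maximal distance from `S`. -/
def resSet {V : Type*} (G : SimpleGraph V) (S : Set V) : Set V :=
  {v | ∀ w, setDist G S w ≤ setDist G S v}

/-- The distance-residual graph: subgraph induced on vertices at maximal distance from `S`. -/
def Res {V : Type*} (G : SimpleGraph V) (S : Set V) : SimpleGraph (resSet G S) :=
  SimpleGraph.induce (resSet G S) G

namespace SimpleGraph

variable {V : Type*} {G : SimpleGraph V} {S : Set V} {f : V → ℕ}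

lemma setDist_le_dist {s : V} (hs : s ∈ S) (w : V) : setDist G S w ≤ G.dist s w :=
  Nat.sInf_le ⟨s, hs, rfl⟩

lemma le_add_length_of_adj_le_succ (hlip : ∀ a b, G.Adj a b → f b ≤ f a + 1) {a b : V}
    (p : G.Walk a b) : f b ≤ f a + p.length := by
  induction p with
  | nil => simp
  | cons h _ ih =>
    have := hlip _ _ h
    rw [Walk.length_cons]
    omega

lemma exists_walk_length_eq_of_descent (hzero : ∀ w, f w = 0 → w ∈ S)
    (hstep : ∀ w, f w ≠ 0 → ∃ w', G.Adj w' w ∧ f w' + 1 = f w) (w : V) :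
    ∃ s ∈ S, ∃ p : G.Walk s w, p.length = f w := by
  induction h : f w using Nat.strong_induction_on generalizing w with
  | _ n ih =>
    obtain rfl | hn := eq_or_ne n 0
    · exact ⟨w, hzero w h, Walk.nil, rfl⟩
    obtain ⟨w', hadj, hw'⟩ := hstep w (h ▸ hn)
    obtain ⟨s, hs, p, hp⟩ := ih (f w') (by omega) w' rfl
    exact ⟨s, hs, p.concat hadj, by rw [Walk.length_concat]; omega⟩

lemma setDist_eq_of_descent (hG : G.Preconnected) (hS : ∀ w, f w = 0 ↔ w ∈ S)
    (hlip : ∀ a b, G.Adj a b → f b ≤ f a + 1)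
    (hstep : ∀ w, f w ≠ 0 → ∃ w', G.Adj w' w ∧ f w' + 1 = f w) :
    setDist G S = f := by
  funext w
  obtain ⟨s, hs, p, hp⟩ := exists_walk_length_eq_of_descent (fun w => (hS w).1) hstep w
  refine le_antisymm ((setDist_le_dist hs w).trans (hp ▸ dist_le p)) ?_
  refine le_csInf ⟨_, s, hs, rfl⟩ ?_
  rintro _ ⟨t, ht, rfl⟩
  obtain ⟨q, hq⟩ := (hG t w).exists_walk_length_eq_dist
  simpa [(hS t).2 ht, hq] using le_add_length_of_adj_le_succ hlip q

lemma nonempty_res_iso_of_resSet_eq_singleton {W : Type*} {H : SimpleGraph W} {T : Set W}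
    {a : V} {b : W} (hS : resSet G S = {a}) (hT : resSet H T = {b}) :
    Nonempty (Res G S ≃g Res H T) := by
  unfold Res
  rw [hS, hT]
  exact ⟨⟨Equiv.ofUnique _ _, fun {x y} => by simp [Subsingleton.elim x y]⟩⟩

lemma Iso.exists_degree_eq_of_sym2_map_eq {W : Type*} {H : SimpleGraph W} (φ : G ≃g H)
    [∀ x, Fintype (G.neighborSet x)] [∀ y, Fintype (H.neighborSet y)] {e : Sym2 V}
    {e' : Sym2 W} (he : e.map φ = e') {y : W} (hy : y ∈ e') :
    ∃ x ∈ e, G.degree x = H.degree y := by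
  obtain ⟨x, hx, rfl⟩ := Sym2.mem_map.1 (he ▸ hy)
  exact ⟨x, hx, (φ.degree_eq x).symm⟩

end SimpleGraph

def squareWithTwoPendants : SimpleGraph (Fin 6) :=
  SimpleGraph.fromRel fun a b =>
    (a.val, b.val) ∈ [(0, 1), (1, 2), (2, 3), (3, 0), (0, 4), (2, 5)]

instance : DecidableRel squareWithTwoPendants.Adj := fun a b => by
  unfold squareWithTwoPendants; infer_instance

namespace squareWithTwoPendants

-- The distance matrix; it is only trusted through `setDist_eq_of_descent`.
def distTable : Fin 6 → Fin 6 → ℕ :=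
  ![![0, 1, 2, 1, 1, 3],
    ![1, 0, 1, 2, 2, 2],
    ![2, 1, 0, 1, 3, 1],
    ![1, 2, 1, 0, 2, 2],
    ![1, 2, 3, 2, 0, 4],
    ![3, 2, 1, 2, 4, 0]]

lemma connected : squareWithTwoPendants.Connected := by
  refine (connected_iff_exists_forall_reachable _).2 ⟨0, fun w => ?_⟩
  obtain ⟨s, rfl, p, -⟩ := exists_walk_length_eq_of_descent (G := squareWithTwoPendants)
    (S := {0}) (f := distTable 0) (by decide) (by decide) w
  exact p.reachable

def edgeDist (u v w : Fin 6) : ℕ := min (distTable u w) (distTable v w)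

lemma edgeDist_certificate : ∀ u v : Fin 6, squareWithTwoPendants.Adj u v →
    (∀ w, edgeDist u v w = 0 ↔ w = u ∨ w = v) ∧
    (∀ a b, squareWithTwoPendants.Adj a b → edgeDist u v b ≤ edgeDist u v a + 1) ∧
    (∀ w, edgeDist u v w ≠ 0 →
      ∃ w', squareWithTwoPendants.Adj w' w ∧ edgeDist u v w' + 1 = edgeDist u v w) := by
  decide

lemma exists_unique_argmax_edgeDist : ∀ u v : Fin 6, squareWithTwoPendants.Adj u v →
    ∃ r, ∀ z, (∀ w, edgeDist u v w ≤ edgeDist u v z) ↔ z = r := by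
  decide

lemma setDist_pair_eq_edgeDist {u v : Fin 6} (h : squareWithTwoPendants.Adj u v) :
    setDist squareWithTwoPendants {u, v} = edgeDist u v := by
  obtain ⟨hzero, hlip, hstep⟩ := edgeDist_certificate u v h
  exact setDist_eq_of_descent connected.preconnected (fun w => by simpa using hzero w) hlip hstep

lemma resSet_pair_eq_singleton {u v : Fin 6} (h : squareWithTwoPendants.Adj u v) :
    ∃ r, resSet squareWithTwoPendants {u, v} = {r} := by
  obtain ⟨r, hr⟩ := exists_unique_argmax_edgeDist u v h
  exact ⟨r, Set.ext fun z => by simp only [resSet, setDist_pair_eq_edgeDist h]; exact hr z⟩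

lemma not_edgeTransitive :
    ¬ ∀ e ∈ squareWithTwoPendants.edgeSet, ∀ e' ∈ squareWithTwoPendants.edgeSet,
      ∃ φ : squareWithTwoPendants ≃g squareWithTwoPendants, e.map φ = e' := by
  intro h
  obtain ⟨φ, hφ⟩ := h s(0, 1) (by decide) s(0, 4) (by decide)
  obtain ⟨x, hx, hdeg⟩ := φ.exists_degree_eq_of_sym2_map_eq hφ (Sym2.mem_mk_right 0 4)
  rcases Sym2.mem_iff.1 hx with rfl | rfl <;> revert hdeg <;> decide

end squareWithTwoPendants

theorem statement_4 :
    ∃ (m : ℕ) (G : SimpleGraph (Fin m)),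
      G.Connected ∧
      ¬ (∀ e ∈ G.edgeSet, ∀ f ∈ G.edgeSet, ∃ φ : G ≃g G, e.map φ = f) ∧
      ∀ u v x y : Fin m, G.Adj u v → G.Adj x y →
        Nonempty (Res G {u, v} ≃g Res G {x, y}) := by
  refine ⟨6, squareWithTwoPendants, squareWithTwoPendants.connected,
    squareWithTwoPendants.not_edgeTransitive, fun u v x y huv hxy => ?_⟩
  obtain ⟨a, ha⟩ := squareWithTwoPendants.resSet_pair_eq_singleton huv
  obtain ⟨b, hb⟩ := squareWithTwoPendants.resSet_pair_eq_singleton hxy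
  exact nonempty_res_iso_of_resSet_eq_singleton ha hb
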